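/- arXiv:1706.02114 — 7 statements merged into one kernel-verified Lean document; each statement's English description precedes it below -/
import Mathlib

section
/- Let $d_1 \le \dots \le d_m$ be positive integers, $F = \{0,\dots,d_1-1\} \times \cdots \times \{0,\dots,d_m-1\}$, $k = \sum_{i=1}^m (d_i-1)$, and $1 \le v \le k$, $u = v-1$. Let $F_u = \{a \in F : \deg(a) = u\}$ where $\deg(a)$ is the sum of the coordinates. Choose $y \in F_v$ and let $a$ be the lexicographically largest element of $\{f \in F_u : f \le_{lex} y\}$. Then $a \le_P y$, i.e., every coordinate of $a$ is at most the corresponding coordinate of $y$. -/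
/-!
If `l` is the last coordinate with `y l ≠ 0`, the lexicographically largest tuple of degree
`deg y - 1` that is `≤_lex y` is `y` with `y l` lowered by one, which lies below `y` coordinatewise.
Indeed, if `g` of that degree exceeded it lexicographically at a first differing position `i`, then
for `i < l` it would also exceed `y`, and for `i ≥ l` it would dominate it coordinatewise (the
tail beyond `l` is zero), forcing a larger degree.
-/

open Finset
open scoped Classical

noncomputable section

/-- The coordinate sum (degree) of a tuple in `F = ∏ [0, dᵢ-1]`. -/
def deg {m : ℕ} {d : Fin m → ℕ} (a : (i : Fin m) → Fin (d i)) : ℕ := ∑ i, (a i : ℕ)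

/-- The mixed-radix value `∑ aᵢ ∏_{j>i} dⱼ` of a tuple. -/
def phi {m : ℕ} {d : Fin m → ℕ} (a : (i : Fin m) → Fin (d i)) : ℕ :=
  ∑ i, (a i : ℕ) * ∏ j ∈ Finset.Ioi i, d j

/-- The shadow of a finite set of tuples: all tuples dominating some element coordinatewise. -/
def shadow {m : ℕ} {d : Fin m → ℕ} (S : Finset ((i : Fin m) → Fin (d i))) :
    Finset ((i : Fin m) → Fin (d i)) :=
  Finset.univ.filter (fun a => ∃ b ∈ S, b ≤ a)

/-- The part of the shadow consisting of tuples of degree exactly `v`. -/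
def shadowAt {m : ℕ} {d : Fin m → ℕ} (v : ℕ) (S : Finset ((i : Fin m) → Fin (d i))) :
    Finset ((i : Fin m) → Fin (d i)) :=
  (shadow S).filter (fun a => deg a = v)

section Lower

variable {m : ℕ} {d : Fin m → ℕ}

lemma deg_lt_deg_of_lt {f g : (i : Fin m) → Fin (d i)} (h : f < g) : deg f < deg g := by
  obtain ⟨hle, i, hi⟩ := Pi.lt_def.1 h
  exact Finset.sum_lt_sum (fun j _ => hle j) ⟨i, mem_univ i, hi⟩

lemma exists_last_ne_zero {y : (i : Fin m) → Fin (d i)} (hy : deg y ≠ 0) :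
    ∃ l, (y l : ℕ) ≠ 0 ∧ ∀ j, l < j → (y j : ℕ) = 0 := by
  obtain ⟨l, hl⟩ : ∃ l, (y l : ℕ) ≠ 0 := by
    by_contra! h
    exact hy (Finset.sum_eq_zero fun i _ => h i)
  set s := univ.filter fun i => (y i : ℕ) ≠ 0
  have hs : s.Nonempty := ⟨l, by simp [s, hl]⟩
  refine ⟨s.max' hs, (mem_filter.1 (s.max'_mem hs)).2, fun j hj => ?_⟩
  by_contra h
  exact (s.le_max' j (by simp [s, h])).not_gt hj

def lowerAt (y : (i : Fin m) → Fin (d i)) (l : Fin m) : (i : Fin m) → Fin (d i) :=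
  Function.update y l ⟨(y l : ℕ) - 1, (Nat.sub_le _ _).trans_lt (y l).isLt⟩

lemma lowerAt_of_ne (y : (i : Fin m) → Fin (d i)) {l j : Fin m} (hj : j ≠ l) :
    lowerAt y l j = y j :=
  Function.update_of_ne hj _ _

lemma val_lowerAt_self (y : (i : Fin m) → Fin (d i)) (l : Fin m) :
    (lowerAt y l l : ℕ) = y l - 1 := by
  simp [lowerAt]

lemma lowerAt_le (y : (i : Fin m) → Fin (d i)) (l : Fin m) : lowerAt y l ≤ y := by
  intro j
  rcases eq_or_ne j l with rfl | hj
  · rw [Fin.le_def, val_lowerAt_self]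
    exact Nat.sub_le _ _
  · rw [lowerAt_of_ne y hj]

lemma deg_lowerAt {y : (i : Fin m) → Fin (d i)} {l : Fin m} (hl : (y l : ℕ) ≠ 0) :
    deg (lowerAt y l) + 1 = deg y := by
  have hsplit (x : (i : Fin m) → Fin (d i)) : deg x = ∑ j ∈ univ.erase l, (x j : ℕ) + x l :=
    (Finset.sum_erase_add _ _ (mem_univ l)).symm
  have hrest : ∑ j ∈ univ.erase l, (lowerAt y l j : ℕ) = ∑ j ∈ univ.erase l, (y j : ℕ) :=
    Finset.sum_congr rfl fun j hj => by rw [lowerAt_of_ne y (ne_of_mem_erase hj)]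
  rw [hsplit, hsplit y, hrest, val_lowerAt_self]
  omega

lemma toLex_le_toLex_lowerAt {y : (i : Fin m) → Fin (d i)} {l : Fin m}
    (hl : (y l : ℕ) ≠ 0) (htail : ∀ j, l < j → (y j : ℕ) = 0)
    {g : (i : Fin m) → Fin (d i)} (hg : deg g + 1 = deg y) (hgy : toLex g ≤ toLex y) :
    toLex g ≤ toLex (lowerAt y l) := by
  refine not_lt.1 fun ⟨i, hagree, hi⟩ => ?_
  rcases lt_or_ge i l with hil | hli
  · refine hgy.not_gt ⟨i, fun j hj => ?_, ?_⟩
    · exact (lowerAt_of_ne y (hj.trans hil).ne).symm.trans (hagree j hj)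
    · exact (lowerAt_of_ne y hil.ne).symm.trans_lt hi
  · have hlt : lowerAt y l < g := by
      refine Pi.lt_def.2 ⟨fun j => ?_, i, hi⟩
      rcases lt_trichotomy j i with hj | rfl | hj
      · exact (hagree j hj).le
      · exact hi.le
      · have hjl : l < j := hli.trans_lt hj
        rw [lowerAt_of_ne y hjl.ne', Fin.le_def, htail j hjl]
        exact Nat.zero_le _
    have := deg_lt_deg_of_lt hlt
    have := deg_lowerAt hl
    omega

end Lower

theorem stmt2_general {m : ℕ} (d : Fin m → ℕ)
    (v : ℕ) (hv1 : 1 ≤ v)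
    (y : (i : Fin m) → Fin (d i)) (hy : deg y = v)
    (a : (i : Fin m) → Fin (d i)) (hadeg : deg a = v - 1)
    (haley : toLex a ≤ toLex y)
    (hamax : ∀ f : (i : Fin m) → Fin (d i),
      deg f = v - 1 → toLex f ≤ toLex y → toLex f ≤ toLex a) :
    a ≤ y := by
  obtain ⟨l, hl, htail⟩ := exists_last_ne_zero (show deg y ≠ 0 by omega)
  have hdeg_lower := deg_lowerAt hl
  have ha_le : toLex a ≤ toLex (lowerAt y l) :=
    toLex_le_toLex_lowerAt hl htail (by omega) haley
  have hlower_le : toLex (lowerAt y l) ≤ toLex a :=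
    hamax _ (by omega) (Pi.toLex_monotone (lowerAt_le y l))
  rw [toLex.injective (le_antisymm ha_le hlower_le)]
  exact lowerAt_le y l

/-- If `y ∈ F` has degree `v` with `1 ≤ v ≤ k`, and `a` is the lexicographically largest
element of degree `u = v - 1` with `a ≤_lex y`, then `a ≤_P y` coordinatewise. -/
theorem stmt2 {m : ℕ} (d : Fin m → ℕ) (hd : ∀ i, 0 < d i) (hmono : Monotone d)
    (v : ℕ) (hv1 : 1 ≤ v) (hvk : v ≤ ∑ i, (d i - 1))
    (y : (i : Fin m) → Fin (d i)) (hy : deg y = v)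
    (a : (i : Fin m) → Fin (d i)) (hadeg : deg a = v - 1)
    (haley : toLex a ≤ toLex y)
    (hamax : ∀ f : (i : Fin m) → Fin (d i),
      deg f = v - 1 → toLex f ≤ toLex y → toLex f ≤ toLex a) :
    a ≤ y :=
  stmt2_general d v hv1 y hy a hadeg haley hamax
end
end

section
/- Let $d_1 \le \dots \le d_m$ be positive integers, $F = \{0,\dots,d_1-1\} \times \cdots \times \{0,\dots,d_m-1\}$, $k = \sum_{i=1}^m(d_i-1)$, and $d \le k$. Let $F_{\le d} = \{a \in F : \deg(a) \le d\}$, and let $a_1 >_{lex} a_2 >_{lex} \cdots >_{lex} a_r$ be the first $r$ elements of $F_{\le d}$ in descending lexicographic order. Then the shadow $\Delta(a_1,\dots,a_r) := \{a \in F : a_i \le_P a \text{ for some } i\}$ equals $\{a \in F : a_r \le_{lex} a\}$. -/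
open Finset
open scoped Classical

noncomputable section

/-!
Lexicographically, `aᵣ < a` means `aᵣ` and `a` agree before some coordinate `i` and `aᵣ i < a i`.
If `aᵣ` vanishes after `i`, then already `aᵣ ≤ a`. Otherwise raise `aᵣ` by one at `i` and zero it
after `i`: the result is lex-above `aᵣ` and, since the cut-off tail was nonzero, of degree at most
`deg aᵣ`; so it lies in the initial segment `A`, and it is coordinatewise below `a`. Conversely
`≤_P` implies `≤_lex`, so the whole shadow lies lex-above `aᵣ`.
-/

section Truncation

variable {m : ℕ} {d : Fin m → ℕ}

theorem deg_eq_sum_Iio_add_add_sum_Ioi (x : (j : Fin m) → Fin (d j)) (i : Fin m) :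
    deg x = (∑ j ∈ Iio i, (x j : ℕ)) + x i + ∑ j ∈ Ioi i, (x j : ℕ) := by
  rw [deg, add_assoc, add_sum_Ioi_eq_sum_Ici (f := fun j => (x j : ℕ)),
    ← sum_filter_add_sum_filter_not univ (· < i)]
  congr 2 <;> ext j <;> simp

theorem le_of_lt_at_of_tail_eq_zero {x y : (j : Fin m) → Fin (d j)} {i : Fin m}
    (hpre : ∀ j < i, x j = y j) (hi : x i < y i) (htail : ∀ j, i < j → (x j : ℕ) = 0) :
    x ≤ y := by
  intro j
  rcases lt_trichotomy j i with h | rfl | h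
  · exact (hpre j h).le
  · exact hi.le
  · exact Fin.le_def.mpr (by simp [htail j h])

variable [∀ j, NeZero (d j)]

def truncate (x : (j : Fin m) → Fin (d j)) (i : Fin m) (v : Fin (d i)) :
    (j : Fin m) → Fin (d j) :=
  Function.update (fun j => if j < i then x j else 0) i v

theorem truncate_of_lt {x : (j : Fin m) → Fin (d j)} {i j : Fin m} (v : Fin (d i)) (h : j < i) :
    truncate x i v j = x j := by
  simp [truncate, h, h.ne]

theorem truncate_of_gt {x : (j : Fin m) → Fin (d j)} {i j : Fin m} (v : Fin (d i)) (h : i < j) :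
    truncate x i v j = 0 := by
  simp [truncate, h.ne', h.not_gt]

@[simp]
theorem truncate_self (x : (j : Fin m) → Fin (d j)) (i : Fin m) (v : Fin (d i)) :
    truncate x i v i = v := by
  simp [truncate]

theorem truncate_le {x y : (j : Fin m) → Fin (d j)} {i : Fin m} {v : Fin (d i)}
    (hpre : ∀ j < i, x j = y j) (hv : v ≤ y i) : truncate x i v ≤ y := by
  intro j
  rcases lt_trichotomy j i with h | rfl | h
  · exact (truncate_of_lt v h).trans (hpre j h) |>.le
  · simpa using hv
  · simp [truncate_of_gt v h]

theorem toLex_lt_truncate {x : (j : Fin m) → Fin (d j)} {i : Fin m} {v : Fin (d i)}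
    (hv : x i < v) : toLex x < toLex (truncate x i v) :=
  ⟨i, fun j hj => (truncate_of_lt v hj).symm, by simpa using hv⟩

theorem deg_truncate_le {x : (j : Fin m) → Fin (d j)} {i : Fin m} {v : Fin (d i)}
    (hv : (v : ℕ) ≤ x i + 1) {k : Fin m} (hik : i < k) (hk : (x k : ℕ) ≠ 0) :
    deg (truncate x i v) ≤ deg x := by
  have htail : 1 ≤ ∑ j ∈ Ioi i, (x j : ℕ) :=
    (Nat.one_le_iff_ne_zero.mpr hk).trans
      (single_le_sum (f := fun j => (x j : ℕ)) (fun _ _ => Nat.zero_le _) (mem_Ioi.mpr hik))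
  have hpre : ∑ j ∈ Iio i, (truncate x i v j : ℕ) = ∑ j ∈ Iio i, (x j : ℕ) :=
    sum_congr rfl fun j hj => by rw [truncate_of_lt v (mem_Iio.mp hj)]
  have hzero : ∑ j ∈ Ioi i, (truncate x i v j : ℕ) = 0 :=
    sum_eq_zero fun j hj => by simp [truncate_of_gt v (mem_Ioi.mp hj)]
  rw [deg_eq_sum_Iio_add_add_sum_Ioi _ i, deg_eq_sum_Iio_add_add_sum_Ioi x i, hpre, hzero,
    truncate_self]
  omega

end Truncation

section InitialSegment

variable {m : ℕ} {d : Fin m → ℕ} {δ : ℕ} {A : Finset ((j : Fin m) → Fin (d j))}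

theorem toLex_le_of_mem_shadow {x a : (j : Fin m) → Fin (d j)}
    (hmin : ∀ y ∈ A, toLex x ≤ toLex y) (ha : a ∈ shadow A) : toLex x ≤ toLex a := by
  obtain ⟨b, hb, hba⟩ := (mem_filter.mp ha).2
  exact (hmin b hb).trans (Pi.toLex_monotone hba)

theorem mem_of_toLex_le (hA : ∀ x ∈ A, ∀ y : (j : Fin m) → Fin (d j),
      deg y ≤ δ → y ∉ A → toLex y < toLex x)
    {x y : (j : Fin m) → Fin (d j)} (hx : x ∈ A) (hy : deg y ≤ δ) (hxy : toLex x ≤ toLex y) :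
    y ∈ A := by
  by_contra hyA
  exact (hA x hx y hy hyA).not_ge hxy

theorem mem_shadow_of_toLex_le (hA : ∀ x ∈ A, ∀ y : (j : Fin m) → Fin (d j),
      deg y ≤ δ → y ∉ A → toLex y < toLex x)
    {x a : (j : Fin m) → Fin (d j)} (hx : x ∈ A) (hxδ : deg x ≤ δ) (hxa : toLex x ≤ toLex a) :
    a ∈ shadow A := by
  refine mem_filter.mpr ⟨mem_univ a, ?_⟩
  rcases hxa.eq_or_lt with heq | hlt
  · exact ⟨x, hx, (toLex.injective heq).le⟩
  obtain ⟨i, hpre, hi⟩ : ∃ i, (∀ j < i, x j = a j) ∧ x i < a i := hlt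
  by_cases htail : ∀ j, i < j → (x j : ℕ) = 0
  · exact ⟨x, hx, le_of_lt_at_of_tail_eq_zero hpre hi htail⟩
  push Not at htail
  obtain ⟨k, hik, hk⟩ := htail
  have : ∀ j, NeZero (d j) := fun j => ⟨(a j).pos.ne'⟩
  let v : Fin (d i) := ⟨x i + 1, lt_of_le_of_lt hi (a i).isLt⟩
  have hva : v ≤ a i := hi
  have hxv : x i < v := Nat.lt_add_one _
  have hdeg : deg (truncate x i v) ≤ δ := (deg_truncate_le le_rfl hik hk).trans hxδ
  exact ⟨truncate x i v, mem_of_toLex_le hA hx hdeg (toLex_lt_truncate hxv).le,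
    truncate_le hpre hva⟩

end InitialSegment

theorem stmt4_general {m : ℕ} (d : Fin m → ℕ)
    (δ : ℕ)
    (A : Finset ((i : Fin m) → Fin (d i)))
    (hA1 : ∀ x ∈ A, deg x ≤ δ)
    (hA3 : ∀ x ∈ A, ∀ y : (i : Fin m) → Fin (d i),
      deg y ≤ δ → y ∉ A → toLex y < toLex x)
    (ar : (i : Fin m) → Fin (d i)) (har : ar ∈ A)
    (hmin : ∀ x ∈ A, toLex ar ≤ toLex x) :
    shadow A = Finset.univ.filter
      (fun a : (i : Fin m) → Fin (d i) => toLex ar ≤ toLex a) := by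
  ext a
  rw [mem_filter, and_iff_right (mem_univ a)]
  exact ⟨toLex_le_of_mem_shadow hmin, mem_shadow_of_toLex_le hA3 har (hA1 ar har)⟩

/-- If `A` consists of the first `r` elements of `F_{≤ δ}` in descending lexicographic order,
and `aᵣ` is its lexicographically smallest element, then the shadow of `A`
equals `{a ∈ F : aᵣ ≤_lex a}`. -/
theorem stmt4 {m : ℕ} (d : Fin m → ℕ) (hd : ∀ i, 0 < d i) (hmono : Monotone d)
    (δ r : ℕ) (hδ : δ ≤ ∑ i, (d i - 1))
    (A : Finset ((i : Fin m) → Fin (d i)))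
    (hA1 : ∀ x ∈ A, deg x ≤ δ) (hA2 : A.card = r)
    (hA3 : ∀ x ∈ A, ∀ y : (i : Fin m) → Fin (d i),
      deg y ≤ δ → y ∉ A → toLex y < toLex x)
    (ar : (i : Fin m) → Fin (d i)) (har : ar ∈ A)
    (hmin : ∀ x ∈ A, toLex ar ≤ toLex x) :
    shadow A = Finset.univ.filter
      (fun a : (i : Fin m) → Fin (d i) => toLex ar ≤ toLex a) :=
  stmt4_general d δ A hA1 hA3 ar har hmin
end
end

section
/- Let $d_1 \le \dots \le d_m$ be positive integers, $F = \{0,\dots,d_1-1\} \times \cdots \times \{0,\dots,d_m-1\}$, $k = \sum_{i=1}^m(d_i-1)$, and $d \le k$. Let $a_1,\dots,a_r$ be the first $r$ elements of $F_{\le d} = \{a \in F : \deg(a) \le d\}$ in descending lexicographic order, with $a_r = (a_{r,1},\dots,a_{r,m})$. Then $|\Delta(a_1,\dots,a_r)| = d_1\cdots d_m - \sum_{i=1}^m a_{r,i} \prod_{j=i+1}^m d_j$. -/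
open Finset
open scoped Classical

noncomputable section

/-! The mixed-radix value `phi` is an order isomorphism from the lex-ordered box `F`
onto `[0, d₁⋯d_m)`. The set `A` consists of the tuples of degree `≤ δ` lying lex-above `a_r`, and
its shadow is the whole lex up-set of `a_r`. Indeed, let `i` be the first coordinate where
`a >_lex a_r` differs from `a_r`. If `a_r` vanishes after `i`, then `a_r ≤ a`; otherwise `a`
dominates the tuple obtained from `a_r` by raising coordinate `i` by one and clearing all later
ones, which lies lex-above `a_r` and has degree at most `deg a_r`. Counting the up-set through
`phi` gives `d₁⋯d_m - phi a_r`. -/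

theorem Finset.sum_mul_prod_filter_lt_lt_prod {ι : Type*} [LinearOrder ι] (s : Finset ι)
    (a d : ι → ℕ) (had : ∀ j ∈ s, a j < d j) :
    ∑ j ∈ s, a j * ∏ k ∈ s with j < k, d k < ∏ j ∈ s, d j := by
  induction s using Finset.induction_on_min with
  | empty => simp
  | insert c s hc ih =>
    have hcs : c ∉ s := fun h => lt_irrefl c (hc c h)
    have hfilter_c : {k ∈ insert c s | c < k} = s := by
      rw [filter_insert, if_neg (lt_irrefl c), filter_true_of_mem hc]
    have hfilter_s : ∀ j ∈ s, {k ∈ insert c s | j < k} = {k ∈ s | j < k} := by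
      intro j hj
      rw [filter_insert, if_neg (hc j hj).not_gt]
    have hs := ih fun j hj => had j (mem_insert_of_mem hj)
    have hac : a c + 1 ≤ d c := had c (mem_insert_self c s)
    rw [sum_insert hcs, prod_insert hcs, hfilter_c, sum_congr rfl fun j hj => by rw [hfilter_s j hj]]
    calc a c * ∏ k ∈ s, d k + ∑ j ∈ s, a j * ∏ k ∈ s with j < k, d k
        < a c * ∏ k ∈ s, d k + ∏ k ∈ s, d k := by gcongr
      _ = (a c + 1) * ∏ k ∈ s, d k := by ring
      _ ≤ d c * ∏ k ∈ s, d k := by gcongr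

theorem Finset.sum_univ_eq_sum_Iio_add_add_sum_Ioi {ι : Type*} [LinearOrder ι] [Fintype ι]
    [LocallyFiniteOrderBot ι] [LocallyFiniteOrderTop ι] (f : ι → ℕ) (i : ι) :
    ∑ j, f j = ∑ j ∈ Iio i, f j + f i + ∑ j ∈ Ioi i, f j := by
  rw [add_assoc, add_sum_Ioi_eq_sum_Ici, ← sum_filter_add_sum_filter_not univ (· < i)]
  congr 1 <;> apply sum_congr _ fun _ _ => rfl <;> ext <;> simp

theorem Finset.card_filter_apply_le_eq_card_sub {α : Type*} [Fintype α] (f : α → ℕ)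
    (hf : Function.Injective f) (hlt : ∀ a, f a < Fintype.card α) (b : α) :
    #{a | f b ≤ f a} = Fintype.card α - f b := by
  have himage : univ.image f = range (Fintype.card α) :=
    eq_of_subset_of_card_le (fun x hx => by obtain ⟨a, -, rfl⟩ := mem_image.1 hx; simpa using hlt a)
      (by rw [card_range, card_image_of_injective _ hf, card_univ])
  rw [← card_image_of_injective _ hf, ← filter_image, himage, ← Nat.card_Ico]
  congr 1; ext x; simp [and_comm]

section

variable {m : ℕ} {d : Fin m → ℕ}

theorem phi_tail_lt (a : (i : Fin m) → Fin (d i)) (i : Fin m) :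
    ∑ j ∈ Ioi i, (a j : ℕ) * ∏ k ∈ Ioi j, d k < ∏ j ∈ Ioi i, d j := by
  refine lt_of_eq_of_lt (sum_congr rfl fun j hj => ?_)
    (sum_mul_prod_filter_lt_lt_prod (Ioi i) (fun j => (a j : ℕ)) d fun j _ => (a j).isLt)
  congr 2; ext k; simpa using fun hjk => (mem_Ioi.1 hj).trans hjk

theorem phi_lt_prod (a : (i : Fin m) → Fin (d i)) : phi a < ∏ i, d i := by
  simpa [phi, filter_lt_eq_Ioi] using
    sum_mul_prod_filter_lt_lt_prod univ (fun j => (a j : ℕ)) d fun j _ => (a j).isLt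

theorem phi_lt_phi_of_toLex_lt {a b : (i : Fin m) → Fin (d i)} (h : toLex a < toLex b) :
    phi a < phi b := by
  obtain ⟨i, hagree, hlt⟩ := h
  have hhead : ∑ j ∈ Iio i, (a j : ℕ) * ∏ k ∈ Ioi j, d k
      = ∑ j ∈ Iio i, (b j : ℕ) * ∏ k ∈ Ioi j, d k :=
    sum_congr rfl fun j hj => by rw [show a j = b j from hagree j (mem_Iio.1 hj)]
  have hlt' : (a i : ℕ) + 1 ≤ b i := hlt
  have htail := phi_tail_lt a i
  have hmid := Nat.mul_le_mul_right (∏ k ∈ Ioi i, d k) hlt'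
  simp only [phi]
  rw [sum_univ_eq_sum_Iio_add_add_sum_Ioi _ i, sum_univ_eq_sum_Iio_add_add_sum_Ioi _ i, hhead]
  rw [add_one_mul] at hmid
  omega

theorem phi_strictMono : StrictMono (fun x : Lex ((i : Fin m) → Fin (d i)) => phi (ofLex x)) :=
  fun _ _ => phi_lt_phi_of_toLex_lt

theorem phi_le_phi_iff {a b : (i : Fin m) → Fin (d i)} : phi a ≤ phi b ↔ toLex a ≤ toLex b :=
  phi_strictMono.le_iff_le

theorem phi_injective : Function.Injective (phi : ((i : Fin m) → Fin (d i)) → ℕ) :=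
  fun _ _ h => toLex.injective (phi_strictMono.injective h)

theorem exists_le_toLex_le_deg_le {a b : (i : Fin m) → Fin (d i)} (h : toLex b ≤ toLex a) :
    ∃ c, c ≤ a ∧ toLex b ≤ toLex c ∧ deg c ≤ deg b := by
  rcases h.eq_or_lt with h | ⟨i, hagree, hlt⟩
  · exact ⟨b, (toLex.injective h).le, le_rfl, le_rfl⟩
  by_cases htail : ∀ j, i < j → (b j : ℕ) = 0
  · refine ⟨b, fun j => ?_, le_rfl, le_rfl⟩
    rcases lt_trichotomy j i with hj | rfl | hj
    · exact (hagree j hj).le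
    · exact hlt.le
    · exact Fin.le_def.2 (by simp [htail j hj])
  push Not at htail
  obtain ⟨j₀, hij₀, hj₀⟩ := htail
  have hbi : (b i : ℕ) + 1 < d i := lt_of_le_of_lt hlt (a i).isLt
  set c : (i : Fin m) → Fin (d i) :=
    Function.update (fun j => if j < i then b j else ⟨0, (b j).pos⟩) i ⟨b i + 1, hbi⟩
  have hc_lt : ∀ j < i, c j = b j := fun j hj => by simp [c, hj.ne, hj]
  have hc_i : (c i : ℕ) = b i + 1 := by simp [c]
  have hc_gt : ∀ j, i < j → (c j : ℕ) = 0 := fun j hj => by simp [c, hj.ne', hj.not_gt]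
  refine ⟨c, fun j => ?_, le_of_lt ⟨i, fun j hj => (hc_lt j hj).symm, ?_⟩, ?_⟩
  · rcases lt_trichotomy j i with hj | rfl | hj
    · exact (hc_lt j hj).trans_le (hagree j hj).le
    · exact Fin.le_def.2 (hc_i ▸ hlt)
    · exact Fin.le_def.2 (by simp [hc_gt j hj])
  · show b i < c i
    exact Fin.lt_def.2 (by omega)
  · have hhead : ∑ j ∈ Iio i, (c j : ℕ) = ∑ j ∈ Iio i, (b j : ℕ) :=
      sum_congr rfl fun j hj => by rw [hc_lt j (mem_Iio.1 hj)]
    have hzero : ∑ j ∈ Ioi i, (c j : ℕ) = 0 := sum_eq_zero fun j hj => hc_gt j (mem_Ioi.1 hj)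
    have hpos : 1 ≤ ∑ j ∈ Ioi i, (b j : ℕ) :=
      (Nat.one_le_iff_ne_zero.2 hj₀).trans
        (single_le_sum (f := fun j => (b j : ℕ)) (fun j _ => Nat.zero_le _) (mem_Ioi.2 hij₀))
    simp only [deg]
    rw [sum_univ_eq_sum_Iio_add_add_sum_Ioi _ i, sum_univ_eq_sum_Iio_add_add_sum_Ioi _ i]
    omega

theorem shadow_filter_deg_le_toLex_le {δ : ℕ} {b : (i : Fin m) → Fin (d i)} (hb : deg b ≤ δ) :
    shadow (univ.filter fun x => deg x ≤ δ ∧ toLex b ≤ toLex x) =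
      univ.filter fun x => toLex b ≤ toLex x := by
  ext a
  simp only [_root_.shadow, mem_filter, mem_univ, true_and]
  constructor
  · rintro ⟨c, ⟨-, hbc⟩, hca⟩
    exact hbc.trans (Pi.toLex_monotone hca)
  · intro hba
    obtain ⟨c, hca, hbc, hcb⟩ := exists_le_toLex_le_deg_le hba
    exact ⟨c, ⟨hcb.trans hb, hbc⟩, hca⟩

end

theorem stmt5_general {m : ℕ} (d : Fin m → ℕ) (δ : ℕ)
    (A : Finset ((i : Fin m) → Fin (d i)))
    (hA1 : ∀ x ∈ A, deg x ≤ δ)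
    (hA3 : ∀ x ∈ A, ∀ y : (i : Fin m) → Fin (d i),
      deg y ≤ δ → y ∉ A → toLex y < toLex x)
    (ar : (i : Fin m) → Fin (d i)) (har : ar ∈ A)
    (hmin : ∀ x ∈ A, toLex ar ≤ toLex x) :
    (shadow A).card = ∏ i, d i - phi ar := by
  have hA : A = univ.filter fun x => deg x ≤ δ ∧ toLex ar ≤ toLex x := by
    ext x
    simp only [mem_filter, mem_univ, true_and]
    refine ⟨fun hx => ⟨hA1 x hx, hmin x hx⟩, fun ⟨hxδ, harx⟩ => ?_⟩
    by_contra hx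
    exact (hA3 ar har x hxδ hx).not_ge harx
  have hcard : Fintype.card ((i : Fin m) → Fin (d i)) = ∏ i, d i := by simp
  rw [hA, shadow_filter_deg_le_toLex_le (hA1 ar har)]
  simp_rw [← phi_le_phi_iff]
  rw [card_filter_apply_le_eq_card_sub phi phi_injective (fun a => hcard ▸ phi_lt_prod a), hcard]

/-- If `A` consists of the first `r` elements of `F_{≤ δ}` in descending lexicographic order,
with smallest element `aᵣ = (a_{r,1},…,a_{r,m})`, then
`|Δ(A)| = d₁⋯d_m - ∑ a_{r,i} ∏_{j>i} dⱼ`. -/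
theorem stmt5 {m : ℕ} (d : Fin m → ℕ) (hd : ∀ i, 0 < d i) (hmono : Monotone d)
    (δ r : ℕ) (hδ : δ ≤ ∑ i, (d i - 1))
    (A : Finset ((i : Fin m) → Fin (d i)))
    (hA1 : ∀ x ∈ A, deg x ≤ δ) (hA2 : A.card = r)
    (hA3 : ∀ x ∈ A, ∀ y : (i : Fin m) → Fin (d i),
      deg y ≤ δ → y ∉ A → toLex y < toLex x)
    (ar : (i : Fin m) → Fin (d i)) (har : ar ∈ A)
    (hmin : ∀ x ∈ A, toLex ar ≤ toLex x) :
    (shadow A).card = ∏ i, d i - phi ar :=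
  stmt5_general d δ A hA1 hA3 ar har hmin
end
end

section
/- Let $d_1 \le \dots \le d_m$ be positive integers, $F = \{0,\dots,d_1-1\} \times \cdots \times \{0,\dots,d_m-1\}$, $k = \sum_i(d_i-1)$, $1 \le u \le v \le k$. Let $M(r)$ be the first $r$ elements of $F_{\le v}$ in descending lexicographic order, $M_u := M(r) \cap F_u$, and $r_u := |M_u|$. Let $M_u^*$ be the first $r_u + 1$ elements of $F_u$ in descending lexicographic order. Then $\Delta_v(M_u) \subseteq M_v \subseteq \Delta_v(M_u^*)$. -/
open Finset
open scoped Classical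

noncomputable section

/-!
The first inclusion holds because `b ≤ a` coordinatewise implies `toLex b ≤ toLex a`, while `M` is
a top segment of `F_{≤ v}` for the lexicographic order. For the second, truncate `a ∈ M_v` greedily
from the left to a tuple `b ≤ a` of degree `u`. Any tuple of degree `u` lexicographically above `b`
is above `a`, hence lies in `M`. So if `b ∉ M_u^*`, all of `M_u^*` would lie above `b` and hence
in `M_u`, which is too small to contain it.
-/

theorem Finset.sum_min_tsub_sum_lt {ι : Type*} [LinearOrder ι] (f : ι → ℕ) (u : ℕ)
    (s : Finset ι) :
    ∑ j ∈ s, min (f j) (u - ∑ k ∈ s with k < j, f k) = min u (∑ j ∈ s, f j) := by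
  induction s using Finset.induction_on_max with
  | empty => simp
  | insert a s ha ih =>
    have hs : ∑ j ∈ s, min (f j) (u - ∑ k ∈ insert a s with k < j, f k) =
        min u (∑ j ∈ s, f j) := by
      rw [← ih]
      refine sum_congr rfl fun j hj => ?_
      rw [filter_insert, if_neg (not_lt.2 (ha j hj).le)]
    have hanot : a ∉ s := fun h => lt_irrefl a (ha a h)
    rw [sum_insert hanot, sum_insert hanot, hs, filter_insert, if_neg (lt_irrefl a),
      filter_true_of_mem ha]
    omega

theorem mem_of_mem_of_le_of_forall_lt {α β : Type*} [LinearOrder β] {e : α → β} {P : α → Prop}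
    {M : Finset α} (hM : ∀ x ∈ M, ∀ y, P y → y ∉ M → e y < e x) {x y : α} (hx : x ∈ M)
    (hy : P y) (hxy : e x ≤ e y) : y ∈ M := by
  by_contra hyM
  exact (hM x hx y hy hyM).not_ge hxy

section LexTruncation

variable {m : ℕ} {d : Fin m → ℕ}

theorem sum_Iic_le_deg (c : (i : Fin m) → Fin (d i)) (i : Fin m) :
    ∑ j ∈ Iic i, (c j : ℕ) ≤ deg c :=
  sum_le_sum_of_subset (subset_univ _)

/-- Greedy truncation of `a` to degree `min u (deg a)`: coordinates are kept from left to right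
until the budget `u` is spent (the truncated subtraction then makes them `0`). -/
def lexTrunc (u : ℕ) (a : (i : Fin m) → Fin (d i)) : (i : Fin m) → Fin (d i) :=
  fun i => ⟨min (a i) (u - ∑ j ∈ Iio i, (a j : ℕ)), (min_le_left _ _).trans_lt (a i).isLt⟩

variable (u : ℕ) (a : (i : Fin m) → Fin (d i))

theorem lexTrunc_le : lexTrunc u a ≤ a := fun _ => Fin.le_def.2 (min_le_left _ _)

theorem sum_Iio_lexTrunc (i : Fin m) :
    ∑ j ∈ Iio i, (lexTrunc u a j : ℕ) = min u (∑ j ∈ Iio i, (a j : ℕ)) := by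
  rw [← sum_min_tsub_sum_lt]
  refine sum_congr rfl fun j hj => ?_
  have hfilter : {k ∈ Iio i | k < j} = Iio j := by
    ext k
    simp only [mem_filter, mem_Iio, and_iff_right_iff_imp]
    exact fun hk => hk.trans (mem_Iio.1 hj)
  rw [hfilter, lexTrunc]

theorem deg_lexTrunc : deg (lexTrunc u a) = min u (deg a) := by
  rw [deg, deg, ← sum_min_tsub_sum_lt]
  refine sum_congr rfl fun j _ => ?_
  rw [filter_gt_eq_Iio, lexTrunc]

theorem lexTrunc_apply_of_sum_Iic_le {i : Fin m} (h : ∑ j ∈ Iic i, (a j : ℕ) ≤ u) :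
    lexTrunc u a i = a i := by
  rw [← sum_Iio_add_eq_sum_Iic] at h
  exact Fin.ext (min_eq_left (by omega))

theorem toLex_lt_of_toLex_lexTrunc_lt {c : (i : Fin m) → Fin (d i)} (hc : deg c = u)
    (h : toLex (lexTrunc u a) < toLex c) : toLex a < toLex c := by
  obtain ⟨i, hpre, hi⟩ := h
  simp only [Pi.toLex_apply] at hpre hi
  have hci := sum_Iic_le_deg c i
  rw [← sum_Iio_add_eq_sum_Iic] at hci
  have hSc : ∑ j ∈ Iio i, (c j : ℕ) = min u (∑ j ∈ Iio i, (a j : ℕ)) := by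
    rw [← sum_Iio_lexTrunc]
    exact sum_congr rfl fun j hj => by rw [← hpre j (mem_Iio.1 hj)]
  have hi' : min (a i : ℕ) (u - ∑ j ∈ Iio i, (a j : ℕ)) < c i := hi
  -- the budget is not exhausted at `i`, so `a` was copied unchanged up to and including `i`
  have hbudget : ∑ j ∈ Iio i, (a j : ℕ) + a i < u := by omega
  have hcopy : ∀ j ≤ i, lexTrunc u a j = a j := fun j hj =>
    lexTrunc_apply_of_sum_Iic_le u a <| by
      refine (sum_le_sum_of_subset (Iic_subset_Iic.2 hj)).trans ?_
      rw [← sum_Iio_add_eq_sum_Iic]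
      exact hbudget.le
  refine ⟨i, fun j hj => ?_, ?_⟩
  · change a j = c j
    rw [← hcopy j hj.le]
    exact hpre j hj
  · change a i < c i
    rw [← hcopy i le_rfl]
    exact hi

end LexTruncation

section Shadow

variable {m : ℕ} {d : Fin m → ℕ}

theorem mem_shadowAt {v : ℕ} {S : Finset ((i : Fin m) → Fin (d i))}
    {a : (i : Fin m) → Fin (d i)} :
    a ∈ shadowAt v S ↔ (∃ b ∈ S, b ≤ a) ∧ deg a = v := by
  simp only [shadowAt, _root_.shadow, mem_filter, mem_univ, true_and]

theorem shadowAt_subset_filter_deg_eq {v : ℕ} {M S : Finset ((i : Fin m) → Fin (d i))}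
    (hM : ∀ x ∈ M, ∀ y, deg y ≤ v → y ∉ M → toLex y < toLex x) (hS : S ⊆ M) :
    shadowAt v S ⊆ M.filter (fun x => deg x = v) := by
  intro a ha
  obtain ⟨⟨b, hb, hba⟩, hdeg⟩ := mem_shadowAt.1 ha
  exact mem_filter.2
    ⟨mem_of_mem_of_le_of_forall_lt hM (hS hb) hdeg.le (Pi.toLex_monotone hba), hdeg⟩

theorem filter_deg_eq_subset_shadowAt {u v : ℕ} (huv : u ≤ v)
    {M Mstar : Finset ((i : Fin m) → Fin (d i))}
    (hM : ∀ x ∈ M, ∀ y, deg y ≤ v → y ∉ M → toLex y < toLex x)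
    (hMstar_deg : ∀ x ∈ Mstar, deg x = u)
    (hcard : (M.filter (fun x => deg x = u)).card < Mstar.card)
    (hMstar_top : ∀ x ∈ Mstar, ∀ y, deg y = u → y ∉ Mstar → toLex y < toLex x) :
    M.filter (fun x => deg x = v) ⊆ shadowAt v Mstar := by
  intro a ha
  obtain ⟨haM, hdeg⟩ := mem_filter.1 ha
  have hdeg_trunc : deg (lexTrunc u a) = u := by rw [deg_lexTrunc, hdeg, min_eq_left huv]
  have hmem : lexTrunc u a ∈ Mstar := by
    by_contra hnot
    have hsub : Mstar ⊆ M.filter (fun x => deg x = u) := fun x hx => by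
      have hlt := toLex_lt_of_toLex_lexTrunc_lt u a (hMstar_deg x hx)
        (hMstar_top x hx _ hdeg_trunc hnot)
      refine mem_filter.2 ⟨?_, hMstar_deg x hx⟩
      exact mem_of_mem_of_le_of_forall_lt hM haM ((hMstar_deg x hx).trans_le huv) hlt.le
    exact (card_le_card hsub).not_gt hcard
  exact mem_shadowAt.2 ⟨⟨_, hmem, lexTrunc_le u a⟩, hdeg⟩

end Shadow

theorem stmt9_general {m : ℕ} (d : Fin m → ℕ)
    (u v : ℕ) (huv : u ≤ v)
    (M : Finset ((i : Fin m) → Fin (d i)))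
    (hM3 : ∀ x ∈ M, ∀ y : (i : Fin m) → Fin (d i),
      deg y ≤ v → y ∉ M → toLex y < toLex x)
    (Mstar : Finset ((i : Fin m) → Fin (d i)))
    (hMs1 : ∀ x ∈ Mstar, deg x = u)
    (hMs2 : Mstar.card = (M.filter (fun x => deg x = u)).card + 1)
    (hMs3 : ∀ x ∈ Mstar, ∀ y : (i : Fin m) → Fin (d i),
      deg y = u → y ∉ Mstar → toLex y < toLex x) :
    shadowAt v (M.filter (fun x => deg x = u)) ⊆ M.filter (fun x => deg x = v) ∧
    M.filter (fun x => deg x = v) ⊆ shadowAt v Mstar :=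
  ⟨shadowAt_subset_filter_deg_eq hM3 (filter_subset _ _),
    filter_deg_eq_subset_shadowAt huv hM3 hMs1 (by omega) hMs3⟩

/-- Let `M` be the first `r` elements of `F_{≤ v}` in descending lexicographic order,
`M_u = M ∩ F_u`, `M_v = M ∩ F_v`, and let `M_u^*` be the first `|M_u| + 1` elements of `F_u`
in descending lexicographic order. Then `Δ_v(M_u) ⊆ M_v ⊆ Δ_v(M_u^*)`. -/
theorem stmt9 {m : ℕ} (d : Fin m → ℕ) (hd : ∀ i, 0 < d i) (hmono : Monotone d)
    (u v r : ℕ) (hu : 1 ≤ u) (huv : u ≤ v) (hv : v ≤ ∑ i, (d i - 1))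
    (M : Finset ((i : Fin m) → Fin (d i)))
    (hM1 : ∀ x ∈ M, deg x ≤ v) (hM2 : M.card = r)
    (hM3 : ∀ x ∈ M, ∀ y : (i : Fin m) → Fin (d i),
      deg y ≤ v → y ∉ M → toLex y < toLex x)
    (Mstar : Finset ((i : Fin m) → Fin (d i)))
    (hMs1 : ∀ x ∈ Mstar, deg x = u)
    (hMs2 : Mstar.card = (M.filter (fun x => deg x = u)).card + 1)
    (hMs3 : ∀ x ∈ Mstar, ∀ y : (i : Fin m) → Fin (d i),
      deg y = u → y ∉ Mstar → toLex y < toLex x) :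
    shadowAt v (M.filter (fun x => deg x = u)) ⊆ M.filter (fun x => deg x = v) ∧
    M.filter (fun x => deg x = v) ⊆ shadowAt v Mstar :=
  stmt9_general d u v huv M hM3 Mstar hMs1 hMs2 hMs3
end
end

section
/- Let $d_1 \le \dots \le d_m$ be positive integers, $F = \{0,\dots,d_1-1\} \times \cdots \times \{0,\dots,d_m-1\}$, $k = \sum_i(d_i-1)$, $r \ge 1$ and $v \le k$. Let $M(r)$ be the first $r$ elements of $F_{\le v}$ in descending lexicographic order and $M_v = M(r) \cap F_v$. Then $|\Delta(M(r))| = r - |M_v| + |\Delta(M_v)|$. -/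
/-!
`M` is an initial segment of `F_{≤ v}` for the lexicographic order, which extends the
coordinatewise order; hence `M` is closed upwards inside `F_{≤ v}`. Any element of `Δ(M)` of
degree above `v` dominates an element of `M` and therefore, by lowering coordinates one unit at a
time, an element of `M` of degree exactly `v`. Thus `Δ(M) = M ∪ Δ(M_v)` with `M ∩ Δ(M_v) = M_v`,
and the formula is inclusion–exclusion.
-/

open Finset
open scoped Classical

noncomputable section

variable {m : ℕ} {d : Fin m → ℕ}

lemma deg_le_deg {a b : (i : Fin m) → Fin (d i)} (h : b ≤ a) : deg b ≤ deg a :=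
  Finset.sum_le_sum fun i _ => h i

lemma exists_between_deg_add_one {a b : (i : Fin m) → Fin (d i)} (hba : b ≤ a)
    (hdeg : deg b < deg a) : ∃ c, b ≤ c ∧ c ≤ a ∧ deg c + 1 = deg a := by
  obtain ⟨i, hi⟩ : ∃ i, b i < a i := by
    by_contra! h
    exact hdeg.not_ge (deg_le_deg h)
  have hi' : (b i : ℕ) < a i := hi
  set c := Function.update a i ⟨(a i : ℕ) - 1, by omega⟩
  have hci : (c i : ℕ) = a i - 1 := by simp [c]
  have hcj : ∀ j ≠ i, c j = a j := fun j hj => Function.update_of_ne hj _ _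
  refine ⟨c, fun j => ?_, fun j => ?_, ?_⟩
  · rcases eq_or_ne j i with rfl | hj
    · exact Fin.le_def.2 (by omega)
    · exact hcj j hj ▸ hba j
  · rcases eq_or_ne j i with rfl | hj
    · exact Fin.le_def.2 (by omega)
    · exact (hcj j hj).le
  · have hc : ∀ j, (c j : ℕ) + (if i = j then 1 else 0) = a j := by
      intro j
      rcases eq_or_ne j i with rfl | hj
      · rw [hci, if_pos rfl]
        exact Nat.sub_add_cancel (Nat.one_le_of_lt hi')
      · simp [hcj j hj, Ne.symm hj]
    simp only [deg, ← Finset.sum_congr rfl fun j _ => hc j, Finset.sum_add_distrib,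
      Finset.sum_ite_eq, Finset.mem_univ, if_true]

lemma exists_between_deg_eq {a b : (i : Fin m) → Fin (d i)} {v : ℕ} (hba : b ≤ a)
    (hb : deg b ≤ v) (ha : v ≤ deg a) : ∃ c, b ≤ c ∧ c ≤ a ∧ deg c = v := by
  induction h : deg a - v generalizing a with
  | zero => exact ⟨a, hba, le_rfl, by omega⟩
  | succ n ih =>
    obtain ⟨c, hbc, hca, hc⟩ := exists_between_deg_add_one hba (by omega)
    obtain ⟨e, hbe, hec, he⟩ := ih hbc (by omega) (by omega)
    exact ⟨e, hbe, hec.trans hca, he⟩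

section LexInitialSegment

variable {v : ℕ} {M : Finset ((i : Fin m) → Fin (d i))}
  (hM1 : ∀ x ∈ M, deg x ≤ v)
  (hM3 : ∀ x ∈ M, ∀ y : (i : Fin m) → Fin (d i), deg y ≤ v → y ∉ M → toLex y < toLex x)

include hM3 in
lemma mem_of_le_of_deg_le {a b : (i : Fin m) → Fin (d i)} (hb : b ∈ M) (hba : b ≤ a)
    (ha : deg a ≤ v) : a ∈ M := by
  by_contra haM
  exact (hM3 b hb a ha haM).not_ge (Pi.toLex_monotone hba)

include hM1 hM3 in
lemma shadow_eq_union_shadow_filter_deg_eq :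
    shadow M = M ∪ shadow (M.filter (fun x => deg x = v)) := by
  ext a
  simp only [_root_.shadow, mem_filter, mem_univ, true_and, mem_union]
  constructor
  · rintro ⟨b, hb, hba⟩
    by_cases ha : deg a ≤ v
    · exact Or.inl (mem_of_le_of_deg_le hM3 hb hba ha)
    · obtain ⟨c, hbc, hca, hc⟩ := exists_between_deg_eq hba (hM1 b hb) (by omega)
      exact Or.inr ⟨c, ⟨mem_of_le_of_deg_le hM3 hb hbc hc.le, hc⟩, hca⟩
  · rintro (haM | ⟨b, ⟨hb, -⟩, hba⟩)
    · exact ⟨a, haM, le_rfl⟩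
    · exact ⟨b, hb, hba⟩

include hM1 in
lemma inter_shadow_filter_deg_eq :
    M ∩ shadow (M.filter (fun x => deg x = v)) = M.filter (fun x => deg x = v) := by
  ext x
  simp only [mem_inter, _root_.shadow, mem_filter, mem_univ, true_and]
  constructor
  · rintro ⟨hx, b, ⟨-, hb⟩, hbx⟩
    exact ⟨hx, (hM1 x hx).antisymm (hb ▸ deg_le_deg hbx)⟩
  · rintro ⟨hx, hxv⟩
    exact ⟨hx, x, ⟨hx, hxv⟩, le_rfl⟩

end LexInitialSegment

theorem stmt10_general {m : ℕ} (d : Fin m → ℕ)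
    (v r : ℕ)
    (M : Finset ((i : Fin m) → Fin (d i)))
    (hM1 : ∀ x ∈ M, deg x ≤ v) (hM2 : M.card = r)
    (hM3 : ∀ x ∈ M, ∀ y : (i : Fin m) → Fin (d i),
      deg y ≤ v → y ∉ M → toLex y < toLex x) :
    (shadow M).card =
      r - (M.filter (fun x => deg x = v)).card +
        (shadow (M.filter (fun x => deg x = v))).card := by
  have hcard := card_union_add_card_inter M (shadow (M.filter (fun x => deg x = v)))
  rw [inter_shadow_filter_deg_eq hM1, ← shadow_eq_union_shadow_filter_deg_eq hM1 hM3] at hcard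
  have := card_filter_le M (fun x => deg x = v)
  omega

/-- Let `M` be the first `r` elements of `F_{≤ v}` in descending lexicographic order and
`M_v = M ∩ F_v`. Then `|Δ(M)| = r - |M_v| + |Δ(M_v)|`. -/
theorem stmt10 {m : ℕ} (d : Fin m → ℕ) (hd : ∀ i, 0 < d i) (hmono : Monotone d)
    (v r : ℕ) (hr : 1 ≤ r) (hv : v ≤ ∑ i, (d i - 1))
    (M : Finset ((i : Fin m) → Fin (d i)))
    (hM1 : ∀ x ∈ M, deg x ≤ v) (hM2 : M.card = r)
    (hM3 : ∀ x ∈ M, ∀ y : (i : Fin m) → Fin (d i),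
      deg y ≤ v → y ∉ M → toLex y < toLex x) :
    (shadow M).card =
      r - (M.filter (fun x => deg x = v)).card +
        (shadow (M.filter (fun x => deg x = v))).card :=
  stmt10_general d v r M hM1 hM2 hM3
end
end

section
/- Let $\mathbb{F}$ be a field, $A_i = \{\gamma_{i,1},\dots,\gamma_{i,d_i}\} \subseteq \mathbb{F}$ with $d_1 \le \dots \le d_m$, $\mathcal{A} = A_1 \times \cdots \times A_m$, $k = \sum_i(d_i-1)$ and $d \le k$. Let $a_1,\dots,a_r$ be the first $r$ elements of $F_{\le d}$ in descending lexicographic order, with $a_r = (a_{r,1},\dots,a_{r,m})$, and for each $a_\ell$ define $f_{a_\ell} = \prod_{s=1}^m \prod_{t=1}^{(a_\ell)_s}(x_s - \gamma_{s,t})$. Then the number of common zeros in $\mathcal{A}$ of $f_{a_1},\dots,f_{a_r}$ equals $\sum_{i=1}^m a_{r,i} \prod_{j=i+1}^m d_j$. -/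
open Finset
open scoped Classical

noncomputable section

/-- The polynomial `f_b = ∏_s ∏_{t=1}^{b_s} (x_s - γ_{s,t})` attached to a tuple `b ∈ F`. -/
def fpoly {𝔽 : Type*} [Field 𝔽] {m : ℕ} {d : Fin m → ℕ}
    (γ : (i : Fin m) → Fin (d i) → 𝔽) (b : (i : Fin m) → Fin (d i)) :
    MvPolynomial (Fin m) 𝔽 :=
  ∏ s : Fin m, ∏ t ∈ Finset.univ.filter (fun t : Fin (d s) => (t : ℕ) < (b s : ℕ)),
    (MvPolynomial.X s - MvPolynomial.C (γ s t))

/-!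
A grid point `(γ_{1,y₁}, …, γ_{m,yₘ})` is a common zero of the `f_{a_l}` iff the index tuple `y`
dominates no `a_l` coordinatewise. These `y` are exactly the tuples lexicographically below
`a_r`: coordinatewise domination implies lexicographic order, and conversely every `y ≥_lex a_r`
dominates some `b ≥_lex a_r` of degree at most `deg a_r`, which is one of the `a_l` because they
form an initial segment of `F_{≤ δ}`. Sorting the tuples below `a_r` by the first coordinate where
they drop below it counts them as the mixed-radix value `phi a_r`.
-/

theorem Pi.toLex_lt_iff {ι : Type*} {β : ι → Type*} [LT ι] [∀ i, LT (β i)] {x y : ∀ i, β i} :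
    toLex x < toLex y ↔ ∃ i, (∀ j < i, x j = y j) ∧ x i < y i := Iff.rfl

section Grid

variable {m : ℕ} {d : Fin m → ℕ}

def lexSlice (a : (i : Fin m) → Fin (d i)) (i : Fin m) : Finset ((i : Fin m) → Fin (d i)) :=
  Fintype.piFinset fun j => if j < i then {a j} else if j = i then Iio (a j) else univ

theorem mem_lexSlice {a y : (i : Fin m) → Fin (d i)} {i : Fin m} :
    y ∈ lexSlice a i ↔ (∀ j < i, y j = a j) ∧ y i < a i := by
  simp only [lexSlice, Fintype.mem_piFinset]
  constructor
  · intro h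
    refine ⟨fun j hj => by simpa [hj] using h j, by simpa using h i⟩
  · rintro ⟨hlt, hi⟩ j
    rcases lt_trichotomy j i with hj | rfl | hj
    · simp [hj, hlt j hj]
    · simpa using hi
    · simp [hj.ne', not_lt_of_gt hj]

theorem card_lexSlice (a : (i : Fin m) → Fin (d i)) (i : Fin m) :
    #(lexSlice a i) = a i * ∏ j ∈ Ioi i, d j := by
  have hcard : ∀ j, #(if j < i then {a j} else if j = i then Iio (a j) else univ)
      = (if j = i then (a i : ℕ) else 1) * (if i < j then d j else 1) := by
    intro j
    rcases lt_trichotomy j i with hj | rfl | hj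
    · simp [hj, hj.ne, not_lt_of_gt hj]
    · simp
    · simp [hj.ne', not_lt_of_gt hj, hj]
  rw [lexSlice, Fintype.card_piFinset]
  simp only [hcard, prod_mul_distrib, prod_ite_eq', mem_univ, if_true, ← prod_filter,
    filter_lt_eq_Ioi]

theorem filter_toLex_lt_eq_biUnion (a : (i : Fin m) → Fin (d i)) :
    univ.filter (fun y => toLex y < toLex a) = univ.biUnion (lexSlice a) := by
  ext y
  simp [Pi.toLex_lt_iff, mem_lexSlice]

theorem card_filter_toLex_lt (a : (i : Fin m) → Fin (d i)) :
    #(univ.filter (fun y => toLex y < toLex a)) = phi a := by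
  rw [filter_toLex_lt_eq_biUnion, card_biUnion, phi]
  · exact sum_congr rfl fun i _ => card_lexSlice a i
  · intro i _ i' _ hne
    refine disjoint_left.mpr fun y hy hy' => ?_
    rw [mem_lexSlice] at hy hy'
    rcases hne.lt_or_gt with h | h
    · exact hy.2.ne (hy'.1 i h)
    · exact hy'.2.ne (hy.1 i' h)

/- If `c <_lex y` first differ at `i`, the witness keeps `c` before `i`, raises `c i` towards
`y i` by the mass `c` carries after `i`, and is zero after `i`. -/
theorem exists_le_deg_le_toLex_le {c y : (i : Fin m) → Fin (d i)} (h : toLex c ≤ toLex y) :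
    ∃ b, b ≤ y ∧ deg b ≤ deg c ∧ toLex c ≤ toLex b := by
  obtain rfl | hlt := h.eq_or_lt
  · exact ⟨c, le_rfl, le_rfl, le_rfl⟩
  obtain ⟨i, hagree, hi⟩ := Pi.toLex_lt_iff.mp hlt
  set R := ∑ j ∈ Ioi i, (c j : ℕ)
  have hi' : (c i : ℕ) < y i := hi
  let b : (j : Fin m) → Fin (d j) := fun j =>
    ⟨if j < i then (c j : ℕ) else if j = i then min (y j : ℕ) (c j + R) else 0, by
      have := (c j).isLt; have := (y j).isLt; split_ifs <;> omega⟩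
  have hb : ∀ j, (b j : ℕ) =
      if j < i then (c j : ℕ) else if j = i then min (y j : ℕ) (c j + R) else 0 := fun _ => rfl
  refine ⟨b, fun j => ?_, ?_, ?_⟩
  · show (b j : ℕ) ≤ y j
    rw [hb]
    split_ifs with hj
    · rw [hagree j hj]
    · exact min_le_left _ _
    · exact Nat.zero_le _
  · have hpt : ∀ j ∈ univ, (b j : ℕ) + (if i < j then (c j : ℕ) else 0)
        ≤ c j + (if j = i then R else 0) := by
      intro j _
      rw [hb]
      rcases lt_trichotomy j i with hj | rfl | hj
      · simp [hj, hj.ne, not_lt_of_gt hj]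
      · simp
      · simp [hj, hj.ne', not_lt_of_gt hj]
    have := sum_le_sum hpt
    rw [sum_add_distrib, sum_add_distrib, sum_ite_eq', ← sum_filter, filter_lt_eq_Ioi,
      if_pos (mem_univ i)] at this
    unfold deg
    omega
  · by_cases hR0 : R = 0
    · have hzero : ∀ j, i < j → (c j : ℕ) = 0 := fun j hj =>
        sum_eq_zero_iff.mp hR0 j (mem_Ioi.mpr hj)
      refine le_of_eq (congrArg toLex (funext fun j => Fin.ext ?_))
      rw [hb]
      rcases lt_trichotomy j i with hj | rfl | hj
      · simp [hj]
      · simp [hR0, hi'.le]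
      · simp [hj.ne', not_lt_of_gt hj, hzero j hj]
    · refine le_of_lt (Pi.toLex_lt_iff.mpr ⟨i, fun j hj => Fin.ext ?_, ?_⟩)
      · rw [hb, if_pos hj]
      · show (c i : ℕ) < b i
        rw [hb, if_neg (lt_irrefl i), if_pos rfl]
        omega

theorem forall_not_le_iff_toLex_lt {ι : Type*} {a : ι → (i : Fin m) → Fin (d i)} {δ : ℕ}
    {c : (i : Fin m) → Fin (d i)} (hc : deg c ≤ δ) (hmin : ∀ l, toLex c ≤ toLex (a l))
    (hseg : ∀ b, deg b ≤ δ → toLex c ≤ toLex b → ∃ l, a l = b) {y : (i : Fin m) → Fin (d i)} :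
    (∀ l, ¬ a l ≤ y) ↔ toLex y < toLex c := by
  constructor
  · intro hy
    by_contra! hcy
    obtain ⟨b, hby, hbc, hcb⟩ := exists_le_deg_le_toLex_le (not_lt.mp hcy)
    obtain ⟨l, rfl⟩ := hseg b (hbc.trans hc) hcb
    exact hy l hby
  · intro hyc l hly
    exact (hyc.trans_le ((hmin l).trans (Pi.toLex_monotone hly))).false

variable {𝔽 : Type*} [Field 𝔽] {γ : (i : Fin m) → Fin (d i) → 𝔽}

theorem eval_fpoly_eq_zero_iff (hγ : ∀ i, Function.Injective (γ i))
    (b y : (i : Fin m) → Fin (d i)) :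
    MvPolynomial.eval (fun i => γ i (y i)) (fpoly γ b) = 0 ↔ ¬ b ≤ y := by
  simp only [fpoly, map_prod, prod_eq_zero_iff, mem_univ, true_and, mem_filter, map_sub,
    MvPolynomial.eval_X, MvPolynomial.eval_C, sub_eq_zero, (hγ _).eq_iff, Pi.le_def, not_forall,
    not_le, Fin.lt_def]
  constructor
  · rintro ⟨s, t, ht, rfl⟩
    exact ⟨s, ht⟩
  · rintro ⟨s, hs⟩
    exact ⟨s, y s, hs, rfl⟩

theorem setOf_commonZeros_eq_image (hγ : ∀ i, Function.Injective (γ i)) {ι : Type*}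
    (a : ι → (i : Fin m) → Fin (d i)) :
    {P : Fin m → 𝔽 | (∀ i, ∃ t, P i = γ i t) ∧ ∀ l, MvPolynomial.eval P (fpoly γ (a l)) = 0}
      = (fun y i => γ i (y i)) '' {y | ∀ l, ¬ a l ≤ y} := by
  ext P
  constructor
  · rintro ⟨hP, hzero⟩
    choose t ht using hP
    obtain rfl : P = fun i => γ i (t i) := funext ht
    exact ⟨t, fun l => (eval_fpoly_eq_zero_iff hγ _ _).mp (hzero l), rfl⟩
  · rintro ⟨y, hy, rfl⟩
    exact ⟨fun i => ⟨y i, rfl⟩, fun l => (eval_fpoly_eq_zero_iff hγ _ _).mpr (hy l)⟩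

end Grid

/-- If `a₁ >_lex ⋯ >_lex a_r` are the first `r` elements of `F_{≤ δ}` in descending
lexicographic order, then the number of common zeros of `f_{a₁}, …, f_{a_r}` in
`𝒜 = A₁ × ⋯ × A_m`, where `A_i = {γ_{i,1},…,γ_{i,d_i}}`, equals
`∑ a_{r,i} ∏_{j>i} dⱼ`. -/
theorem stmt13 {𝔽 : Type*} [Field 𝔽] {m : ℕ}
    (d : Fin m → ℕ)
    (γ : (i : Fin m) → Fin (d i) → 𝔽) (hγ : ∀ i, Function.Injective (γ i))
    (δ r : ℕ) (hr : 0 < r)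
    (a : Fin r → ((i : Fin m) → Fin (d i)))
    (ha1 : ∀ l, deg (a l) ≤ δ)
    (ha2 : ∀ l l' : Fin r, l < l' → toLex (a l') < toLex (a l))
    (ha3 : ∀ y : (i : Fin m) → Fin (d i), deg y ≤ δ → (∀ l, y ≠ a l) →
      toLex y < toLex (a ⟨r - 1, by omega⟩)) :
    Set.ncard {P : Fin m → 𝔽 |
        (∀ i, ∃ t, P i = γ i t) ∧ ∀ l, MvPolynomial.eval P (fpoly γ (a l)) = 0}
      = phi (a ⟨r - 1, by omega⟩) := by
  set last : Fin r := ⟨r - 1, by omega⟩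
  have hmin : ∀ l, toLex (a last) ≤ toLex (a l) := by
    intro l
    obtain h | h := (show l ≤ last from Fin.le_def.mpr (by simp [last]; omega)).eq_or_lt
    · rw [h]
    · exact (ha2 l last h).le
  have hseg : ∀ b, deg b ≤ δ → toLex (a last) ≤ toLex b → ∃ l, a l = b := by
    intro b hb hle
    by_contra! hne
    exact (ha3 b hb fun l h => hne l h.symm).not_ge hle
  have hinj : Function.Injective fun (y : (i : Fin m) → Fin (d i)) i => γ i (y i) :=
    fun y y' h => funext fun i => hγ i (congrFun h i)
  simp_rw [setOf_commonZeros_eq_image hγ, Set.ncard_image_of_injective _ hinj,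
    forall_not_le_iff_toLex_lt (ha1 last) hmin hseg, ← card_filter_toLex_lt, ← coe_filter_univ,
    Set.ncard_coe_finset]
end
end

section
/- Let $q$ be a prime power, $A_1,\dots,A_m \subseteq \mathbb{F}_q$ with $|A_i| = d_i$, $d_1 \le \dots \le d_m$, $\mathcal{A} = A_1 \times \cdots \times A_m$, and $d \le \sum_i(d_i-1)$. Write $d = \ell + \sum_{i=1}^j(d_i-1)$ with $j \ge 0$ and $0 \le \ell \le d_{j+1}-1$ (this representation is determined). Then the minimum distance of $AC_q(d,\mathcal{A})$ equals $(d_{j+1}-\ell)\, d_{j+2}\cdots d_m$. -/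
/-!
By the footprint bound, a nonzero `f` with `deg_{xᵢ} f < dᵢ` has, for some monomial `x^a` of `f`,
at least `∏ (dᵢ - aᵢ)` non-zeros on `A₁ × ⋯ × Aₘ`: expand `f` in `x₁`, apply induction to the
leading coefficient and count the non-roots in `A₁` of the resulting univariate polynomials.
Since `∑ aᵢ ≤ δ`, it remains to minimise `∏ bᵢ` over `1 ≤ bᵢ ≤ dᵢ` with `∑ (dᵢ - bᵢ) ≤ δ`. For
nondecreasing `dᵢ` the minimum is attained by the greedy tuple
`(1, …, 1, d_{j+1} - ℓ, d_{j+2}, …, d_m)`, and it is the weight of `∏ᵢ ∏_{s ∈ Sᵢ} (xᵢ - s)`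
for subsets `Sᵢ ⊆ Aᵢ` of size `dᵢ - bᵢ`.
-/

open Finset
open scoped Classical

noncomputable section

namespace Fin

variable {M : Type*} [CommMonoid M] {m : ℕ}

@[to_additive]
theorem prod_filter_lt_val_succ (k : ℕ) (f : Fin (m + 1) → M) :
    ∏ i ∈ univ.filter (fun i : Fin (m + 1) => k < (i : ℕ)), f i =
      ∏ i ∈ univ.filter (fun i : Fin m => k ≤ (i : ℕ)), f i.succ := by
  simp [prod_filter, Fin.prod_univ_succ]

@[to_additive]
theorem prod_filter_le_val_eq_mul {j : ℕ} (hj : j < m) (f : Fin m → M) :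
    ∏ i ∈ univ.filter (fun i : Fin m => j ≤ (i : ℕ)), f i =
      f ⟨j, hj⟩ * ∏ i ∈ univ.filter (fun i : Fin m => j < (i : ℕ)), f i := by
  have : univ.filter (fun i : Fin m => j ≤ (i : ℕ)) =
      insert ⟨j, hj⟩ (univ.filter (fun i : Fin m => j < (i : ℕ))) := by
    ext i
    simp [Fin.ext_iff, le_iff_eq_or_lt, eq_comm]
  rw [this, prod_insert (by simp)]

theorem sum_card_filter_cons_le {α : Type*} (A : Fin (m + 1) → Finset α)
    (p : (Fin (m + 1) → α) → Prop) [DecidablePred p] {N : Finset (Fin m → α)}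
    (hN : N ⊆ Fintype.piFinset (Fin.tail A)) :
    ∑ y ∈ N, #{x ∈ A 0 | p (Fin.cons x y)} ≤ #{P ∈ Fintype.piFinset A | p P} := by
  rw [← card_sigma]
  refine card_le_card_of_injOn (fun z => Fin.cons z.2 z.1) ?_ ?_
  · rintro ⟨y, x⟩ hyx
    simp only [coe_sigma, Set.mem_sigma_iff, mem_coe, mem_filter] at hyx
    simp only [mem_coe, mem_filter, Fin.mem_piFinset_iff_zero_tail, Fin.cons_zero, Fin.tail_cons]
    exact ⟨⟨hyx.2.1, hN hyx.1⟩, hyx.2.2⟩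
  · rintro ⟨y, x⟩ - ⟨y', x'⟩ - h
    obtain ⟨rfl, rfl⟩ := Fin.cons_inj.1 h
    rfl

end Fin

theorem Nat.mul_le_mul_add_sub {p u q : ℕ} (hpu : p ≤ u) (huq : u ≤ q) :
    p * q ≤ u * (q + p - u) := by
  obtain ⟨e, rfl⟩ := Nat.exists_eq_add_of_le hpu
  obtain ⟨w, rfl⟩ := Nat.exists_eq_add_of_le huq
  rw [show p + e + w + p - (p + e) = p + w by omega]
  nlinarith

def greedyTuple {m : ℕ} (d : Fin m → ℕ) (j c : ℕ) (i : Fin m) : ℕ :=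
  if (i : ℕ) < j then 1 else if (i : ℕ) = j then c else d i

section GreedyTuple

variable {m : ℕ} (d : Fin m → ℕ) {j : ℕ} (c : ℕ)

theorem one_le_greedyTuple (hd : ∀ i, 1 ≤ d i) (hc : 1 ≤ c) (i : Fin m) :
    1 ≤ greedyTuple d j c i := by
  unfold greedyTuple
  split_ifs
  exacts [le_rfl, hc, hd i]

variable (hj : j < m)
include hj

theorem greedyTuple_le (hd : ∀ i, 1 ≤ d i) (hc : c ≤ d ⟨j, hj⟩) (i : Fin m) :
    greedyTuple d j c i ≤ d i := by
  unfold greedyTuple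
  split_ifs with h₁ h₂
  · exact hd i
  · rwa [show i = ⟨j, hj⟩ from Fin.ext h₂]
  · exact le_rfl

theorem prod_greedyTuple :
    ∏ i, greedyTuple d j c i = c * ∏ i ∈ univ.filter (fun i : Fin m => j < (i : ℕ)), d i := by
  have : ∀ i : Fin m, greedyTuple d j c i =
      (if i = ⟨j, hj⟩ then c else 1) * (if j < (i : ℕ) then d i else 1) := by
    intro i
    simp only [greedyTuple, Fin.ext_iff]
    split_ifs <;> omega
  rw [prod_congr rfl fun i _ => this i, prod_mul_distrib, prod_ite_eq', prod_filter]
  simp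

theorem sum_greedyTuple :
    ∑ i, greedyTuple d j c i = j + c + ∑ i ∈ univ.filter (fun i : Fin m => j < (i : ℕ)), d i := by
  have : ∀ i : Fin m, greedyTuple d j c i = ((if (i : ℕ) < j then 1 else 0) +
      (if i = ⟨j, hj⟩ then c else 0)) + (if j < (i : ℕ) then d i else 0) := by
    intro i
    simp only [greedyTuple, Fin.ext_iff]
    split_ifs <;> omega
  rw [sum_congr rfl fun i _ => this i, sum_add_distrib, sum_add_distrib, sum_ite_eq',
    ← sum_filter, ← sum_filter]
  simp [Fin.card_filter_val_lt, hj.le]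

theorem sum_tsub_greedyTuple :
    ∑ i, (d i - greedyTuple d j c i) =
      (d ⟨j, hj⟩ - c) + ∑ i ∈ univ.filter (fun i : Fin m => (i : ℕ) < j), (d i - 1) := by
  have : ∀ i : Fin m, d i - greedyTuple d j c i =
      (if i = ⟨j, hj⟩ then d i - c else 0) + (if (i : ℕ) < j then d i - 1 else 0) := by
    intro i
    simp only [greedyTuple, Fin.ext_iff]
    split_ifs <;> omega
  rw [sum_congr rfl fun i _ => this i, sum_add_distrib, sum_ite_eq', ← sum_filter]
  simp

end GreedyTuple

/-- Induction on `m`, peeling off `u = b 0`. The tail is compared with the greedy tuple of the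
tail in which either `c` is lowered to `c + 1 - u` (when `j ≥ 1` and `u ≤ c`) or the entry `q`
following `c` is lowered to `q + c - u`; `Nat.mul_le_mul_add_sub` compares the products. -/
theorem prod_greedyTuple_le_prod {m : ℕ} (d b : Fin m → ℕ) (hd : Monotone d)
    (hb : ∀ i, 1 ≤ b i) (hbd : ∀ i, b i ≤ d i) (j : ℕ) (hj : j < m) (c : ℕ)
    (hsum : ∑ i, greedyTuple d j c i ≤ ∑ i, b i) :
    ∏ i, greedyTuple d j c i ≤ ∏ i, b i := by
  induction m generalizing j c with
  | zero => exact absurd hj (Nat.not_lt_zero j)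
  | succ m ih =>
    set u := b 0
    have hu : u ≤ d 0 := hbd 0
    have ih' := ih (fun i => d i.succ) (fun i => b i.succ) (hd.comp Fin.strictMono_succ.monotone)
      (fun i => hb i.succ) (fun i => hbd i.succ)
    rw [prod_greedyTuple d c hj, Fin.prod_univ_succ, Fin.prod_filter_lt_val_succ]
    rw [sum_greedyTuple d c hj, Fin.sum_univ_succ, Fin.sum_filter_lt_val_succ] at hsum
    by_cases hA : 1 ≤ j ∧ u ≤ c
    · obtain ⟨j, rfl⟩ : ∃ j', j = j' + 1 := ⟨j - 1, by omega⟩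
      simp only [Nat.add_one_le_iff] at hsum ⊢
      set R := ∏ i ∈ univ.filter (fun i : Fin m => j < (i : ℕ)), d i.succ
      have key := ih' j (by omega) (c + 1 - u)
        (by rw [sum_greedyTuple _ _ (by omega)]; omega)
      rw [prod_greedyTuple _ _ (by omega)] at key
      calc c * R ≤ u * (c + 1 - u) * R :=
            Nat.mul_le_mul_right _ (by simpa using Nat.mul_le_mul_add_sub (hb 0) hA.2)
        _ ≤ u * ∏ i : Fin m, b i.succ := by rw [mul_assoc]; gcongr
    · have hcu : c ≤ u := by
        rcases Nat.eq_zero_or_pos j with rfl | hj0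
        · have : ∑ i : Fin m, b i.succ ≤ ∑ i : Fin m, d i.succ := sum_le_sum fun i _ => hbd i.succ
          rw [filter_true_of_mem fun i _ => Nat.zero_le _] at hsum
          omega
        · omega
      rcases Nat.lt_or_ge j m with hjm | hjm
      · rw [Fin.prod_filter_le_val_eq_mul hjm]
        rw [Fin.sum_filter_le_val_eq_add hjm] at hsum
        set q := d (Fin.succ ⟨j, hjm⟩)
        set R := ∏ i ∈ univ.filter (fun i : Fin m => j < (i : ℕ)), d i.succ
        have hq : u ≤ q := hu.trans (hd (Fin.zero_le _))
        have key := ih' j hjm (q + c - u) (by rw [sum_greedyTuple _ _ hjm]; omega)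
        rw [prod_greedyTuple _ _ hjm] at key
        calc c * (q * R) ≤ u * (q + c - u) * R := by
              rw [← mul_assoc]
              exact Nat.mul_le_mul_right _ (Nat.mul_le_mul_add_sub hcu hq)
          _ ≤ u * ∏ i : Fin m, b i.succ := by rw [mul_assoc]; gcongr
      · rw [prod_eq_one fun i hi => absurd (mem_filter.1 hi).2 (by omega), mul_one]
        exact hcu.trans (Nat.le_mul_of_pos_right _ (one_le_prod' fun (i : Fin m) _ => hb i.succ))

theorem Finset.sum_le_sum_tsub_of_sum_le_sum_tsub {ι : Type*} (s : Finset ι) {d g a : ι → ℕ}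
    (hg : ∀ i ∈ s, g i ≤ d i) (ha : ∀ i ∈ s, a i ≤ d i)
    (h : ∑ i ∈ s, a i ≤ ∑ i ∈ s, (d i - g i)) : ∑ i ∈ s, g i ≤ ∑ i ∈ s, (d i - a i) := by
  rw [sum_tsub_distrib s hg] at h
  rw [sum_tsub_distrib s ha]
  have := sum_le_sum hg
  omega

theorem Polynomial.card_tsub_natDegree_le_card_filter_eval_ne_zero {R : Type*} [CommRing R]
    [IsDomain R] {p : Polynomial R} (hp : p ≠ 0) (A : Finset R) :
    #A - p.natDegree ≤ #{x ∈ A | p.eval x ≠ 0} := by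
  have hroots : #{x ∈ A | p.eval x = 0} ≤ p.natDegree :=
    card_le_degree_of_subset_roots fun x hx => by
      simp only [mem_val, mem_filter] at hx
      exact (mem_roots hp).2 hx.2
  have := card_filter_add_card_filter_not (s := A) (fun x => p.eval x = 0)
  simp only [ne_eq] at *
  omega

namespace MvPolynomial

theorem degreeOf_X_sub_C_le {R σ : Type*} [CommRing R] [Nontrivial R] (k i : σ) (c : R) :
    degreeOf k (X i - C c : MvPolynomial σ R) ≤ if k = i then 1 else 0 := by
  refine (degreeOf_sub_le _ _ _).trans ?_
  rw [degreeOf_X, degreeOf_C, max_eq_left (Nat.zero_le _)]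

variable {R : Type*} [CommRing R] [IsDomain R]

theorem card_tsub_natDegree_finSuccEquiv_le {m : ℕ} (f : MvPolynomial (Fin (m + 1)) R)
    (A : Finset R) {y : Fin m → R} (hy : eval y (finSuccEquiv R m f).leadingCoeff ≠ 0) :
    #A - (finSuccEquiv R m f).natDegree ≤ #{x ∈ A | eval (Fin.cons x y) f ≠ 0} := by
  set q := finSuccEquiv R m f
  have hne : q.map (eval y) ≠ 0 := fun h => hy <| by
    rw [← Polynomial.leadingCoeff_map_of_leadingCoeff_ne_zero _ hy, h, Polynomial.leadingCoeff_zero]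
  simpa only [eval_eq_eval_mv_eval', Polynomial.natDegree_map_of_leadingCoeff_ne_zero _ hy] using
    Polynomial.card_tsub_natDegree_le_card_filter_eval_ne_zero hne A

theorem exists_mem_support_prod_card_tsub_le :
    ∀ {m : ℕ} (A : Fin m → Finset R) {f : MvPolynomial (Fin m) R}, f ≠ 0 →
      ∃ a ∈ f.support, ∏ i, (#(A i) - a i) ≤ #{P ∈ Fintype.piFinset A | eval P f ≠ 0}
  | 0, A, f, hf => by
    have hc : coeff 0 f ≠ 0 := fun h => hf (by rw [f.eq_C_of_isEmpty, h, map_zero])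
    refine ⟨0, mem_support_iff.2 hc, ?_⟩
    rw [prod_of_isEmpty, one_le_card]
    exact ⟨isEmptyElim, mem_filter.2 ⟨Fintype.mem_piFinset.2 fun i => i.elim0,
      by rwa [f.eq_C_of_isEmpty, eval_C]⟩⟩
  | m + 1, A, f, hf => by
    set q := finSuccEquiv R m f
    have hlc : q.leadingCoeff ≠ 0 :=
      Polynomial.leadingCoeff_ne_zero.2 (EmbeddingLike.map_ne_zero_iff.2 hf)
    obtain ⟨a, ha, hle⟩ := exists_mem_support_prod_card_tsub_le (Fin.tail A) hlc
    refine ⟨Finsupp.cons q.natDegree a, mem_support_coeff_finSuccEquiv.1 ha, ?_⟩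
    set N := {y ∈ Fintype.piFinset (Fin.tail A) | eval y q.leadingCoeff ≠ 0}
    calc ∏ i, (#(A i) - Finsupp.cons q.natDegree a i)
        = (#(A 0) - q.natDegree) * ∏ i, (#(Fin.tail A i) - a i) := by
          simp [Fin.prod_univ_succ, Fin.tail]
      _ ≤ (#(A 0) - q.natDegree) * #N := by gcongr
      _ = ∑ _y ∈ N, (#(A 0) - q.natDegree) := by rw [sum_const, smul_eq_mul, mul_comm]
      _ ≤ ∑ y ∈ N, #{x ∈ A 0 | eval (Fin.cons x y) f ≠ 0} :=
          sum_le_sum fun y hy => card_tsub_natDegree_finSuccEquiv_le f (A 0) (mem_filter.1 hy).2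
      _ ≤ #{P ∈ Fintype.piFinset A | eval P f ≠ 0} :=
          Fin.sum_card_filter_cons_le A (fun P => eval P f ≠ 0) (filter_subset _ _)

theorem exists_card_filter_eval_ne_zero_eq_prod {m : ℕ} (A : Fin m → Finset R) (g : Fin m → ℕ)
    (hg : ∀ i, g i ≤ #(A i)) :
    ∃ f : MvPolynomial (Fin m) R, f.totalDegree ≤ ∑ i, (#(A i) - g i) ∧
      (∀ i, f.degreeOf i ≤ #(A i) - g i) ∧
      #{P ∈ Fintype.piFinset A | eval P f ≠ 0} = ∏ i, g i := by
  choose S hSA hS using fun i => exists_subset_card_eq (Nat.sub_le #(A i) (g i))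
  refine ⟨∏ i, ∏ c ∈ S i, (X i - C c), ?_, fun k => ?_, ?_⟩
  · refine (totalDegree_finsetProd _ _).trans (sum_le_sum fun i _ => ?_)
    refine (totalDegree_finsetProd _ _).trans ?_
    rw [← hS i, card_eq_sum_ones]
    refine sum_le_sum fun c _ => (totalDegree_sub_C_le _ _).trans ?_
    rw [totalDegree_X]
  · refine (degreeOf_prod_le _ _ _).trans ?_
    refine (sum_le_sum fun i _ => (degreeOf_prod_le _ _ _).trans
      (sum_le_sum fun c _ => degreeOf_X_sub_C_le k i c)).trans ?_
    simp [hS]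
  · have : {P ∈ Fintype.piFinset A | eval P (∏ i, ∏ c ∈ S i, (X i - C c)) ≠ 0} =
        Fintype.piFinset fun i => A i \ S i := by
      ext P
      simp [prod_ne_zero_iff, sub_ne_zero, Fintype.mem_piFinset, forall_and]
    rw [this, Fintype.card_piFinset]
    refine prod_congr rfl fun i _ => ?_
    rw [card_sdiff_of_subset (hSA i), hS i, Nat.sub_sub_self (hg i)]

end MvPolynomial

theorem prod_greedyTuple_le_card_filter_eval_ne_zero {R : Type*} [CommRing R] [IsDomain R]
    {m : ℕ} (A : Fin m → Finset R) (hmono : Monotone fun i => #(A i)) {j : ℕ} (hj : j < m)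
    {c : ℕ} (hcA : c ≤ #(A ⟨j, hj⟩)) {f : MvPolynomial (Fin m) R} (hf : f ≠ 0)
    (htot : f.totalDegree ≤ ∑ i, (#(A i) - greedyTuple (fun i => #(A i)) j c i))
    (hdeg : ∀ i, f.degreeOf i < #(A i)) :
    ∏ i, greedyTuple (fun i => #(A i)) j c i ≤
      #{P ∈ Fintype.piFinset A | MvPolynomial.eval P f ≠ 0} := by
  obtain ⟨a, ha, hle⟩ := MvPolynomial.exists_mem_support_prod_card_tsub_le A hf
  have haA : ∀ i, a i < #(A i) :=
    fun i => (MvPolynomial.monomial_le_degreeOf i ha).trans_lt (hdeg i)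
  have hsum : ∑ i, a i ≤ ∑ i, (#(A i) - greedyTuple (fun i => #(A i)) j c i) := by
    refine le_trans (le_of_eq ?_) ((MvPolynomial.le_totalDegree ha).trans htot)
    exact (Finsupp.sum_fintype a (fun _ e => e) fun _ => rfl).symm
  have hgA := greedyTuple_le (fun i => #(A i)) c hj (fun i => (haA i).pos) hcA
  refine le_trans (prod_greedyTuple_le_prod _ _ hmono (fun i => by have := haA i; omega)
    (fun i => Nat.sub_le _ _) j hj c ?_) hle
  exact sum_le_sum_tsub_of_sum_le_sum_tsub _ (fun i _ => hgA i) (fun i _ => (haA i).le) hsum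

theorem isLeast_ncard_eval_ne_zero_greedyTuple {R : Type*} [CommRing R] [IsDomain R] {m : ℕ}
    (A : Fin m → Finset R) (hA : ∀ i, (A i).Nonempty) (hmono : Monotone fun i => #(A i))
    (j : ℕ) (hj : j < m) (c : ℕ) (hc : 1 ≤ c) (hcA : c ≤ #(A ⟨j, hj⟩)) :
    IsLeast {N : ℕ | ∃ f : MvPolynomial (Fin m) R,
        f.totalDegree ≤ ∑ i, (#(A i) - greedyTuple (fun i => #(A i)) j c i) ∧
        (∀ i, f.degreeOf i < #(A i)) ∧
        (∃ P : Fin m → R, (∀ i, P i ∈ A i) ∧ MvPolynomial.eval P f ≠ 0) ∧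
        N = Set.ncard {P : Fin m → R | (∀ i, P i ∈ A i) ∧ MvPolynomial.eval P f ≠ 0}}
      (∏ i, greedyTuple (fun i => #(A i)) j c i) := by
  have hncard : ∀ f : MvPolynomial (Fin m) R,
      {P : Fin m → R | (∀ i, P i ∈ A i) ∧ MvPolynomial.eval P f ≠ 0}.ncard =
        #{P ∈ Fintype.piFinset A | MvPolynomial.eval P f ≠ 0} := by
    intro f
    rw [← Set.ncard_coe_finset]
    congr
    ext P
    simp
  refine ⟨?_, ?_⟩
  · have hA1 : ∀ i, 1 ≤ #(A i) := fun i => card_pos.2 (hA i)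
    have hg1 := one_le_greedyTuple (fun i => #(A i)) (j := j) c hA1 hc
    obtain ⟨f, htot, hdeg, hcard⟩ := MvPolynomial.exists_card_filter_eval_ne_zero_eq_prod A _
      (greedyTuple_le (fun i => #(A i)) c hj hA1 hcA)
    obtain ⟨P, hP⟩ : {P ∈ Fintype.piFinset A | MvPolynomial.eval P f ≠ 0}.Nonempty := by
      rw [← card_pos, hcard]
      exact prod_pos fun i _ => hg1 i
    rw [mem_filter, Fintype.mem_piFinset] at hP
    refine ⟨f, htot, fun i => (hdeg i).trans_lt ?_, ⟨P, hP⟩, by rw [hncard, hcard]⟩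
    have := hg1 i
    have := hA1 i
    omega
  · rintro N ⟨f, htot, hdeg, ⟨P, -, hP⟩, rfl⟩
    have hf : f ≠ 0 := by
      rintro rfl
      simp at hP
    rw [hncard]
    exact prod_greedyTuple_le_card_filter_eval_ne_zero A hmono hj hcA hf htot hdeg

theorem stmt16_general {𝔽 : Type*} [Field 𝔽] {m : ℕ}
    (d : Fin m → ℕ) (hd : ∀ i, 0 < d i) (hmono : Monotone d)
    (A : Fin m → Finset 𝔽) (hcard : ∀ i, (A i).card = d i)
    (δ : ℕ)
    (j : ℕ) (hj : j < m) (ℓ : ℕ) (hℓ : ℓ ≤ d ⟨j, hj⟩ - 1)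
    (hrep : δ = ℓ + ∑ i ∈ Finset.univ.filter (fun i : Fin m => (i : ℕ) < j), (d i - 1)) :
    IsLeast {N : ℕ | ∃ f : MvPolynomial (Fin m) 𝔽,
        f.totalDegree ≤ δ ∧ (∀ i, f.degreeOf i < d i) ∧
        (∃ P : Fin m → 𝔽, (∀ i, P i ∈ A i) ∧ MvPolynomial.eval P f ≠ 0) ∧
        N = Set.ncard {P : Fin m → 𝔽 | (∀ i, P i ∈ A i) ∧ MvPolynomial.eval P f ≠ 0}}
      ((d ⟨j, hj⟩ - ℓ) * ∏ i ∈ Finset.univ.filter (fun i : Fin m => j < (i : ℕ)), d i) := by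
  obtain rfl : (fun i => #(A i)) = d := funext hcard
  beta_reduce at hd hℓ hrep ⊢
  have hℓ' : ℓ < #(A ⟨j, hj⟩) := by have := hd ⟨j, hj⟩; omega
  have key := isLeast_ncard_eval_ne_zero_greedyTuple A (fun i => card_pos.1 (hd i)) hmono j hj
    (#(A ⟨j, hj⟩) - ℓ) (by omega) (Nat.sub_le _ _)
  rwa [sum_tsub_greedyTuple _ _ hj, prod_greedyTuple _ _ hj, Nat.sub_sub_self hℓ'.le, ← hrep]
    at key

/-- Write `δ = ℓ + ∑_{i=1}^{j} (dᵢ - 1)` with `0 ≤ ℓ ≤ d_{j+1} - 1`. Then the minimum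
distance of `AC_q(δ, 𝒜)` equals `(d_{j+1} - ℓ) d_{j+2} ⋯ d_m` (indices `1`-based; here the
index `j` is `0`-based, so `d_{j+1}` is `d ⟨j, _⟩`). Stated as: that value is the least
Hamming weight of a nonzero codeword. -/
theorem stmt16 {𝔽 : Type*} [Field 𝔽] [Fintype 𝔽] {m : ℕ}
    (d : Fin m → ℕ) (hd : ∀ i, 0 < d i) (hmono : Monotone d)
    (A : Fin m → Finset 𝔽) (hcard : ∀ i, (A i).card = d i)
    (δ : ℕ) (hδ : δ ≤ ∑ i, (d i - 1))
    (j : ℕ) (hj : j < m) (ℓ : ℕ) (hℓ : ℓ ≤ d ⟨j, hj⟩ - 1)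
    (hrep : δ = ℓ + ∑ i ∈ Finset.univ.filter (fun i : Fin m => (i : ℕ) < j), (d i - 1)) :
    IsLeast {N : ℕ | ∃ f : MvPolynomial (Fin m) 𝔽,
        f.totalDegree ≤ δ ∧ (∀ i, f.degreeOf i < d i) ∧
        (∃ P : Fin m → 𝔽, (∀ i, P i ∈ A i) ∧ MvPolynomial.eval P f ≠ 0) ∧
        N = Set.ncard {P : Fin m → 𝔽 | (∀ i, P i ∈ A i) ∧ MvPolynomial.eval P f ≠ 0}}
      ((d ⟨j, hj⟩ - ℓ) * ∏ i ∈ Finset.univ.filter (fun i : Fin m => j < (i : ℕ)), d i) :=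
  stmt16_general d hd hmono A hcard δ j hj ℓ hℓ hrep
end
end
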